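/- Let A ∈ ℂ^{M×N_a} and B ∈ ℂ^{M×N_b} be matrices with unit ℓ²-norm columns, with coherences μ_a and μ_b respectively and mutual coherence μ_m. Let z = A x + B e where x ∈ ℂ^{N_a} with ‖x‖₀ = n_x and e ∈ ℂ^{N_b} with supp(e) = E and ‖e‖₀ = n_e. If μ_m² · 2 n_x n_e < [1 − μ_a(2n_x−1)]_+ · [1 − μ_b(n_e−1)]_+, then x is the unique solution of the constrained ℓ¹-minimization (BP,E): for every x' ∈ ℂ^{N_a} with ‖x'‖₁ ≤ ‖x‖₁ such that A x' − z lies in the column span of B_E, one has x' = x. -/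
import Mathlib


open scoped BigOperators ComplexConjugate
open Matrix

/-- Coherence of a matrix: max over distinct column pairs of |aₖᴴ aₗ| (0 if fewer than 2 columns). -/
noncomputable def coh {m n : Type*} [Fintype m] [Fintype n] (A : Matrix m n ℂ) : ℝ :=
  ⨆ k, ⨆ l, ⨆ _ : k ≠ l, ‖∑ i, conj (A i k) * A i l‖

/-- Mutual coherence between two matrices: max over column pairs of |aₖᴴ bₗ|. -/
noncomputable def mcoh {m na nb : Type*} [Fintype m] [Fintype na] [Fintype nb]
    (A : Matrix m na ℂ) (B : Matrix m nb ℂ) : ℝ :=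
  ⨆ k, ⨆ l, ‖∑ i, conj (A i k) * B i l‖

/-- All columns have unit ℓ²-norm. -/
def unitCols {m n : Type*} [Fintype m] (A : Matrix m n ℂ) : Prop :=
  ∀ k, ∑ i, ‖A i k‖ ^ 2 = 1

/-- Number of nonzero entries of a vector. -/
noncomputable def l0 {n : Type*} (v : n → ℂ) : ℕ := {i | v i ≠ 0}.ncard

/-- ℓ¹ norm of a vector. -/
noncomputable def l1 {n : Type*} [Fintype n] (v : n → ℂ) : ℝ := ∑ i, ‖v i‖

/-- Squared ℓ² norm of a vector. -/
noncomputable def l2sq {n : Type*} [Fintype n] (v : n → ℂ) : ℝ := ∑ i, ‖v i‖ ^ 2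

/-- Submatrix consisting of the columns with index in `E`. -/
def colsub {m n : Type*} (B : Matrix m n ℂ) (E : Finset n) : Matrix m {j // j ∈ E} ℂ :=
  fun i j => B i j.val

/-- Orthogonal projector onto the orthogonal complement of the column span of `B_E`. -/
noncomputable def projC {m n : Type*} [Fintype m] [DecidableEq m] [DecidableEq n]
    (B : Matrix m n ℂ) (E : Finset n) : Matrix m m ℂ :=
  1 - colsub B E * ((colsub B E)ᴴ * colsub B E)⁻¹ * (colsub B E)ᴴ
section Aux
variable {m n na nb : Type*} [Fintype m] [Fintype n] [Fintype na] [Fintype nb]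

lemma coh_nonneg (A : Matrix m n ℂ) : 0 ≤ coh A :=
  Real.iSup_nonneg fun _ => Real.iSup_nonneg fun _ => Real.iSup_nonneg fun _ => norm_nonneg _

lemma mcoh_nonneg (A : Matrix m na ℂ) (B : Matrix m nb ℂ) : 0 ≤ mcoh A B :=
  Real.iSup_nonneg fun _ => Real.iSup_nonneg fun _ => norm_nonneg _

lemma le_coh (A : Matrix m n ℂ) {k l : n} (h : k ≠ l) :
    ‖∑ i, conj (A i k) * A i l‖ ≤ coh A := by
  have h1 : (⨆ _ : k ≠ l, ‖∑ i, conj (A i k) * A i l‖) = ‖∑ i, conj (A i k) * A i l‖ :=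
    ciSup_pos h
  rw [coh, ← h1]
  refine le_trans (le_ciSup (f := fun l => ⨆ _ : k ≠ l, ‖∑ i, conj (A i k) * A i l‖)
    (Set.Finite.bddAbove (Set.finite_range _)) l) ?_
  exact le_ciSup (f := fun k => ⨆ l, ⨆ _ : k ≠ l, ‖∑ i, conj (A i k) * A i l‖)
    (Set.Finite.bddAbove (Set.finite_range _)) k

lemma le_mcoh (A : Matrix m na ℂ) (B : Matrix m nb ℂ) (k : na) (l : nb) :
    ‖∑ i, conj (A i k) * B i l‖ ≤ mcoh A B := by
  rw [mcoh]
  refine le_trans (le_ciSup (f := fun l => ‖∑ i, conj (A i k) * B i l‖)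
    (Set.Finite.bddAbove (Set.finite_range _)) l) ?_
  exact le_ciSup (f := fun k => ⨆ l, ‖∑ i, conj (A i k) * B i l‖)
    (Set.Finite.bddAbove (Set.finite_range _)) k

lemma dot_mulVec {ι : Type*} [Fintype ι] (C : Matrix m ι ℂ) (a : m → ℂ) (v : ι → ℂ) :
    ∑ i, conj (a i) * (C.mulVec v) i = ∑ l, (∑ i, conj (a i) * C i l) * v l := by
  simp only [Matrix.mulVec, dotProduct, Finset.mul_sum, Finset.sum_mul]
  rw [Finset.sum_comm]
  exact Finset.sum_congr rfl fun l _ => Finset.sum_congr rfl fun i _ => by ring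

lemma diag_one (C : Matrix m n ℂ) (h : ∀ k, ∑ i, ‖C i k‖ ^ 2 = 1) (k : n) :
    ∑ i, conj (C i k) * C i k = 1 := by
  have : ∀ i, conj (C i k) * C i k = ((‖C i k‖ ^ 2 : ℝ) : ℂ) := by
    intro i
    rw [mul_comm, Complex.mul_conj']; push_cast; ring
  simp_rw [this]
  rw [← Complex.ofReal_sum, h k]
  norm_num
end Aux

set_option maxHeartbeats 1000000 in
/-- Theorem 3, ℓ¹ part: x is the unique solution of (BP,E). -/
theorem BPE_unique_solution
    {M Na Nb : ℕ} (A : Matrix (Fin M) (Fin Na) ℂ) (B : Matrix (Fin M) (Fin Nb) ℂ)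
    (hA : unitCols A) (hB : unitCols B)
    (μa μb μm : ℝ) (hμa : μa = coh A) (hμb : μb = coh B) (hμm : μm = mcoh A B)
    (x : Fin Na → ℂ) (e : Fin Nb → ℂ) (E : Finset (Fin Nb))
    (hE : Function.support e = ↑E)
    (nx ne : ℕ) (hnx : l0 x = nx) (hne : l0 e = ne)
    (z : Fin M → ℂ) (hz : z = A.mulVec x + B.mulVec e)
    (hcond : μm ^ 2 * (2 * nx * ne) <
      max (1 - μa * (2 * (nx : ℝ) - 1)) 0 * max (1 - μb * ((ne : ℝ) - 1)) 0) :
    ∀ x' : Fin Na → ℂ, l1 x' ≤ l1 x →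
      (∃ u : {j // j ∈ E} → ℂ, A.mulVec x' - z = (colsub B E).mulVec u) →
      x' = x := by
  rintro x' hl1 ⟨u, hu⟩
  by_contra hne'
  classical
  set p : Fin Na → ℂ := x' - x with hpdef
  have hpapp : ∀ k, p k = x' k - x k := fun k => rfl
  have hp0 : ∃ k, p k ≠ 0 := by
    by_contra h
    push_neg at h
    exact hne' (funext fun k => sub_eq_zero.mp (h k))
  set q : {j // j ∈ E} → ℂ := fun j => u j + e j.val with hqdef
  -- B e = B_E (e restricted)
  have hBe : B.mulVec e = (colsub B E).mulVec (fun j => e j.val) := by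
    funext i
    show ∑ j, B i j * e j = ∑ j : {j // j ∈ E}, B i j.val * e j.val
    rw [Finset.sum_coe_sort E (fun j => B i j * e j)]
    symm
    apply Finset.sum_subset (Finset.subset_univ E)
    intro j _ hj
    have he0 : e j = 0 := by
      by_contra h
      exact hj (by rw [← Finset.mem_coe, ← hE]; exact h)
    rw [he0, mul_zero]
  -- key identity: A p = B_E q
  have key : A.mulVec p = (colsub B E).mulVec q := by
    have h1 : A.mulVec p = A.mulVec x' - A.mulVec x := by
      rw [hpdef, Matrix.mulVec_sub]
    have h2 : A.mulVec x' - A.mulVec x = (A.mulVec x' - z) + B.mulVec e := by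
      rw [hz]; abel
    rw [h1, h2, hu, hBe, ← Matrix.mulVec_add]
    congr 1
  set P := ∑ k, ‖p k‖ with hPdef
  set Q := ∑ j : {j // j ∈ E}, ‖q j‖ with hQdef
  have hP0' : 0 ≤ P := Finset.sum_nonneg fun _ _ => norm_nonneg _
  have hQ0' : 0 ≤ Q := Finset.sum_nonneg fun _ _ => norm_nonneg _
  have hP0 : 0 < P := by
    obtain ⟨k, hk⟩ := hp0
    calc (0:ℝ) < ‖p k‖ := norm_pos_iff.mpr hk
      _ ≤ P := Finset.single_le_sum (fun i _ => norm_nonneg (p i)) (Finset.mem_univ k)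
  have hμa0 : 0 ≤ μa := hμa ▸ coh_nonneg A
  have hμb0 : 0 ≤ μb := hμb ▸ coh_nonneg B
  have hμm0 : 0 ≤ μm := hμm ▸ mcoh_nonneg A B
  -- support of x
  set S : Finset (Fin Na) := Finset.univ.filter (fun k => x k ≠ 0) with hSdef
  have hScard : S.card = nx := by
    rw [← hnx]
    unfold l0
    rw [show {i | x i ≠ 0} = (↑S : Set (Fin Na)) from by ext i; simp [hSdef],
      Set.ncard_coe_finset]
  have hEcard : Fintype.card {j // j ∈ E} = ne := by
    rw [← hne]
    unfold l0
    rw [show {i | e i ≠ 0} = (↑E : Set (Fin Nb)) from hE, Set.ncard_coe_finset]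
    exact Fintype.card_coe E
  -- cone condition
  have hcone : ∑ k ∈ Sᶜ, ‖p k‖ ≤ ∑ k ∈ S, ‖p k‖ := by
    have h1 : l1 x' = ∑ k ∈ S, ‖x' k‖ + ∑ k ∈ Sᶜ, ‖p k‖ := by
      rw [l1, ← Finset.sum_add_sum_compl S]
      congr 1
      refine Finset.sum_congr rfl fun k hk => ?_
      have hx0 : x k = 0 := by
        simp only [hSdef, Finset.mem_compl, Finset.mem_filter, Finset.mem_univ,
          true_and, not_not] at hk
        exact hk
      rw [hpapp, hx0, sub_zero]
    have h2 : l1 x = ∑ k ∈ S, ‖x k‖ := by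
      rw [l1, ← Finset.sum_add_sum_compl S]
      have : ∑ k ∈ Sᶜ, ‖x k‖ = 0 := Finset.sum_eq_zero fun k hk => by
        simp only [hSdef, Finset.mem_compl, Finset.mem_filter, Finset.mem_univ,
          true_and, not_not] at hk
        rw [hk, norm_zero]
      rw [this, add_zero]
    have h3 : ∑ k ∈ S, (‖x k‖ - ‖p k‖) ≤ ∑ k ∈ S, ‖x' k‖ := by
      refine Finset.sum_le_sum fun k _ => ?_
      have h4 : ‖x k‖ - ‖x' k‖ ≤ ‖x k - x' k‖ := norm_sub_norm_le _ _
      have h5 : ‖x k - x' k‖ = ‖p k‖ := by rw [hpapp, norm_sub_rev]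
      linarith
    rw [Finset.sum_sub_distrib] at h3
    linarith [h1 ▸ h2 ▸ hl1]
  have hPsplit : P = ∑ k ∈ S, ‖p k‖ + ∑ k ∈ Sᶜ, ‖p k‖ :=
    (Finset.sum_add_sum_compl S _).symm
  -- A-side per-coordinate inequality
  have hstar : ∀ k, ‖p k‖ + μa * ‖p k‖ ≤ μa * P + μm * Q := by
    intro k
    have hdot : ∑ i, conj (A i k) * (A.mulVec p) i
        = ∑ l, (∑ i, conj (A i k) * A i l) * p l := dot_mulVec A (fun i => A i k) p
    have hsplit : ∑ l, (∑ i, conj (A i k) * A i l) * p l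
        = (∑ i, conj (A i k) * A i k) * p k
          + ∑ l ∈ Finset.univ.erase k, (∑ i, conj (A i k) * A i l) * p l :=
      (Finset.add_sum_erase _ _ (Finset.mem_univ k)).symm
    have hkeq : p k = (∑ i, conj (A i k) * (A.mulVec p) i)
        - ∑ l ∈ Finset.univ.erase k, (∑ i, conj (A i k) * A i l) * p l := by
      rw [hdot, hsplit, diag_one A hA k]; ring
    have herase : ∑ l ∈ Finset.univ.erase k, ‖p l‖ = P - ‖p k‖ := by
      have := Finset.sum_erase_add Finset.univ (fun l => ‖p l‖) (Finset.mem_univ k)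
      linarith [this]
    have hrest : ‖∑ l ∈ Finset.univ.erase k, (∑ i, conj (A i k) * A i l) * p l‖
        ≤ μa * (P - ‖p k‖) := by
      calc ‖∑ l ∈ Finset.univ.erase k, (∑ i, conj (A i k) * A i l) * p l‖
          ≤ ∑ l ∈ Finset.univ.erase k, ‖(∑ i, conj (A i k) * A i l) * p l‖ :=
            norm_sum_le _ _
        _ ≤ ∑ l ∈ Finset.univ.erase k, μa * ‖p l‖ := by
            refine Finset.sum_le_sum fun l hl => ?_
            rw [norm_mul]
            exact mul_le_mul_of_nonneg_right
              (hμa ▸ le_coh A (Finset.ne_of_mem_erase hl).symm) (norm_nonneg _)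
        _ = μa * (P - ‖p k‖) := by rw [← Finset.mul_sum, herase]
    have hdot2 : ‖∑ i, conj (A i k) * (A.mulVec p) i‖ ≤ μm * Q := by
      rw [key, dot_mulVec]
      calc ‖∑ j : {j // j ∈ E}, (∑ i, conj (A i k) * colsub B E i j) * q j‖
          ≤ ∑ j : {j // j ∈ E}, ‖(∑ i, conj (A i k) * colsub B E i j) * q j‖ :=
            norm_sum_le _ _
        _ ≤ ∑ j : {j // j ∈ E}, μm * ‖q j‖ := by
            refine Finset.sum_le_sum fun j _ => ?_
            rw [norm_mul]
            exact mul_le_mul_of_nonneg_right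
              (hμm ▸ le_mcoh A B k j.val) (norm_nonneg _)
        _ = μm * Q := by rw [← Finset.mul_sum]
    have h6 : ‖p k‖ ≤ μm * Q + μa * (P - ‖p k‖) := by
      calc ‖p k‖ ≤ ‖∑ i, conj (A i k) * (A.mulVec p) i‖
            + ‖∑ l ∈ Finset.univ.erase k, (∑ i, conj (A i k) * A i l) * p l‖ := by
              rw [hkeq]; exact norm_sub_le _ _
        _ ≤ μm * Q + μa * (P - ‖p k‖) := add_le_add hdot2 hrest
    linarith
  -- sum over S
  have hI : (1 - μa * (2 * (nx:ℝ) - 1)) * P ≤ 2 * nx * μm * Q := by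
    have hsum : ∑ k ∈ S, (‖p k‖ + μa * ‖p k‖) ≤ S.card • (μa * P + μm * Q) :=
      Finset.sum_le_card_nsmul _ _ _ fun k _ => hstar k
    rw [hScard, nsmul_eq_mul] at hsum
    have hT : ∑ k ∈ S, (‖p k‖ + μa * ‖p k‖)
        = (1 + μa) * ∑ k ∈ S, ‖p k‖ := by
      rw [Finset.sum_add_distrib, ← Finset.mul_sum]; ring
    rw [hT] at hsum
    have hPle : P ≤ 2 * ∑ k ∈ S, ‖p k‖ := by linarith
    have h2 : (1 + μa) * P ≤ (1 + μa) * (2 * ∑ k ∈ S, ‖p k‖) :=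
      mul_le_mul_of_nonneg_left hPle (by linarith)
    nlinarith [hsum, h2]
  -- B-side per-coordinate inequality
  have hstarB : ∀ j : {j // j ∈ E}, ‖q j‖ + μb * ‖q j‖ ≤ μb * Q + μm * P := by
    intro j
    have hdot : ∑ i, conj (B i j.val) * ((colsub B E).mulVec q) i
        = ∑ j', (∑ i, conj (B i j.val) * colsub B E i j') * q j' :=
      dot_mulVec (colsub B E) (fun i => B i j.val) q
    have hsplit : ∑ j', (∑ i, conj (B i j.val) * colsub B E i j') * q j'
        = (∑ i, conj (B i j.val) * colsub B E i j) * q j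
          + ∑ j' ∈ Finset.univ.erase j, (∑ i, conj (B i j.val) * colsub B E i j') * q j' :=
      (Finset.add_sum_erase _ _ (Finset.mem_univ j)).symm
    have hdiag : ∑ i, conj (B i j.val) * colsub B E i j = 1 := diag_one B hB j.val
    have hkeq : q j = (∑ i, conj (B i j.val) * ((colsub B E).mulVec q) i)
        - ∑ j' ∈ Finset.univ.erase j, (∑ i, conj (B i j.val) * colsub B E i j') * q j' := by
      rw [hdot, hsplit, hdiag]; ring
    have herase : ∑ j' ∈ Finset.univ.erase j, ‖q j'‖ = Q - ‖q j‖ := by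
      have := Finset.sum_erase_add Finset.univ (fun j' => ‖q j'‖) (Finset.mem_univ j)
      linarith [this]
    have hrest : ‖∑ j' ∈ Finset.univ.erase j, (∑ i, conj (B i j.val) * colsub B E i j') * q j'‖
        ≤ μb * (Q - ‖q j‖) := by
      calc ‖∑ j' ∈ Finset.univ.erase j, (∑ i, conj (B i j.val) * colsub B E i j') * q j'‖
          ≤ ∑ j' ∈ Finset.univ.erase j, ‖(∑ i, conj (B i j.val) * colsub B E i j') * q j'‖ :=
            norm_sum_le _ _
        _ ≤ ∑ j' ∈ Finset.univ.erase j, μb * ‖q j'‖ := by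
            refine Finset.sum_le_sum fun j' hj' => ?_
            rw [norm_mul]
            refine mul_le_mul_of_nonneg_right ?_ (norm_nonneg _)
            have hvne : j.val ≠ j'.val := fun h =>
              (Finset.ne_of_mem_erase hj') (Subtype.ext h.symm)
            exact hμb ▸ le_coh B hvne
        _ = μb * (Q - ‖q j‖) := by rw [← Finset.mul_sum, herase]
    have hdot2 : ‖∑ i, conj (B i j.val) * ((colsub B E).mulVec q) i‖ ≤ μm * P := by
      rw [← key, dot_mulVec]
      calc ‖∑ l, (∑ i, conj (B i j.val) * A i l) * p l‖
          ≤ ∑ l, ‖(∑ i, conj (B i j.val) * A i l) * p l‖ := norm_sum_le _ _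
        _ ≤ ∑ l, μm * ‖p l‖ := by
            refine Finset.sum_le_sum fun l _ => ?_
            rw [norm_mul]
            refine mul_le_mul_of_nonneg_right ?_ (norm_nonneg _)
            have hconj : ∑ i, conj (B i j.val) * A i l
                = conj (∑ i, conj (A i l) * B i j.val) := by
              rw [map_sum]
              exact Finset.sum_congr rfl fun i _ => by
                rw [_root_.map_mul, Complex.conj_conj, mul_comm]
            rw [hconj, RCLike.norm_conj]
            exact hμm ▸ le_mcoh A B l j.val
        _ = μm * P := by rw [← Finset.mul_sum]
    have h6 : ‖q j‖ ≤ μm * P + μb * (Q - ‖q j‖) := by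
      calc ‖q j‖ ≤ ‖∑ i, conj (B i j.val) * ((colsub B E).mulVec q) i‖
            + ‖∑ j' ∈ Finset.univ.erase j, (∑ i, conj (B i j.val) * colsub B E i j') * q j'‖ := by
              rw [hkeq]; exact norm_sub_le _ _
        _ ≤ μm * P + μb * (Q - ‖q j‖) := add_le_add hdot2 hrest
    linarith
  -- sum over all of E
  have hII : (1 - μb * ((ne:ℝ) - 1)) * Q ≤ ne * μm * P := by
    have hsum : ∑ j : {j // j ∈ E}, (‖q j‖ + μb * ‖q j‖)
        ≤ (Finset.univ : Finset {j // j ∈ E}).card • (μb * Q + μm * P) :=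
      Finset.sum_le_card_nsmul _ _ _ fun j _ => hstarB j
    rw [Finset.card_univ, hEcard, nsmul_eq_mul] at hsum
    have hT : ∑ j : {j // j ∈ E}, (‖q j‖ + μb * ‖q j‖) = (1 + μb) * Q := by
      rw [Finset.sum_add_distrib, ← Finset.mul_sum]; ring
    rw [hT] at hsum
    nlinarith [hsum]
  -- positivity of the two factors
  have hRHSpos : 0 < max (1 - μa * (2 * (nx : ℝ) - 1)) 0 * max (1 - μb * ((ne : ℝ) - 1)) 0 :=
    lt_of_le_of_lt (by positivity) hcond
  have hmax1 : 0 < max (1 - μa * (2 * (nx : ℝ) - 1)) 0 := by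
    by_contra h
    push_neg at h
    rw [le_antisymm h (le_max_right _ _), zero_mul] at hRHSpos
    exact lt_irrefl _ hRHSpos
  have hmax2 : 0 < max (1 - μb * ((ne : ℝ) - 1)) 0 := by
    by_contra h
    push_neg at h
    rw [le_antisymm h (le_max_right _ _), mul_zero] at hRHSpos
    exact lt_irrefl _ hRHSpos
  have hca : 0 < 1 - μa * (2 * (nx : ℝ) - 1) := by
    rcases lt_max_iff.mp hmax1 with h | h
    · exact h
    · exact absurd h (lt_irrefl 0)
  have hcb : 0 < 1 - μb * ((ne : ℝ) - 1) := by
    rcases lt_max_iff.mp hmax2 with h | h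
    · exact h
    · exact absurd h (lt_irrefl 0)
  rw [max_eq_left hca.le, max_eq_left hcb.le] at hcond
  have hQ0 : 0 < Q := by
    rcases lt_or_eq_of_le hQ0' with h | h
    · exact h
    · exfalso
      rw [← h, mul_zero] at hI
      nlinarith [mul_pos hca hP0]
  have hprod := mul_le_mul hI hII
    (mul_nonneg hcb.le hQ0')
    (mul_nonneg (mul_nonneg (by positivity) hμm0) hQ0')
  have hfin := mul_lt_mul_of_pos_right hcond (mul_pos hP0 hQ0)
  nlinarith [hprod, hfin]
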